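/- arXiv:1802.01847 — 2 statements merged into one kernel-verified Lean document; each statement's English description precedes it below -/
import Mathlib

section
/- Let {X_n} be random variables with P(X_n = x_n^{(1)}) = 1 - p_n and P(X_n = x_n^{(2)}) = p_n, where p_n ∈ (0,1) with p_n → 0, x_n^{(1)} → 0, x_n^{(2)} → x̄ ∈ (0,+∞], x_n^{(i)} ≥ 0. Let v_n → +∞ with (log p_n)/v_n → -c for some c ∈ (0,+∞]. Then {X_n} obeys an LDP on ℝ̄ = ℝ ∪ {+∞} with speed v_n and rate function I with I(0) = 0, I(x̄) = c, and I(x) = +∞ otherwise. -/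
open Filter MeasureTheory
open scoped ENNReal

/-!
Eventually the law of `X n` is carried by the two atoms `x₁ n → 0` and `x₂ n → x̄` (distinct,
since `x̄ ≠ 0`), of masses `1 - p n = e ^ (o (v n))` and `p n = e ^ (-(c + o 1) v n)`.
An open set containing `0` (resp. `x̄`) eventually contains `x₁ n` (resp. `x₂ n`), which gives
the lower bound; a closed set missing `0` (resp. both `0` and `x̄`) eventually misses `x₁ n`
(resp. both atoms), so its probability is at most `p n` (resp. zero), which gives the upper bound.
-/

noncomputable def scaledLog (v : ℝ) (m : ℝ≥0∞) : EReal := ((v⁻¹ : ℝ) : EReal) * ENNReal.log m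

theorem scaledLog_mono {v : ℝ} (hv : 0 ≤ v) : Monotone (scaledLog v) := fun _ _ h =>
  mul_le_mul_of_nonneg_left (ENNReal.log_monotone h) (EReal.coe_nonneg.2 (inv_nonneg.2 hv))

theorem scaledLog_nonpos {v : ℝ} (hv : 0 ≤ v) {m : ℝ≥0∞} (hm : m ≤ 1) : scaledLog v m ≤ 0 := by
  simpa [scaledLog] using scaledLog_mono hv hm

theorem scaledLog_zero {v : ℝ} (hv : 0 < v) : scaledLog v 0 = ⊥ := by
  rw [scaledLog, ENNReal.log_zero, EReal.coe_mul_bot_of_pos (inv_pos.2 hv)]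

theorem scaledLog_ofReal (v : ℝ) {q : ℝ} (hq : 0 < q) :
    scaledLog v (ENNReal.ofReal q) = ((Real.log q / v : ℝ) : EReal) := by
  rw [scaledLog, ENNReal.log_ofReal_of_pos hq, ← EReal.coe_mul, inv_mul_eq_div]

theorem tendsto_scaledLog_ofReal_of_tendsto_one {ι : Type*} {l : Filter ι} {q v : ι → ℝ}
    (hq : ∀ i, 0 < q i) (hq1 : Tendsto q l (nhds 1)) (hv : Tendsto v l atTop) :
    Tendsto (fun i => scaledLog (v i) (ENNReal.ofReal (q i))) l (nhds 0) := by
  simp_rw [scaledLog_ofReal _ (hq _)]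
  have hlog : Tendsto (fun i => Real.log (q i)) l (nhds 0) := by
    rw [← Real.log_one]
    exact (Real.continuousAt_log one_ne_zero).tendsto.comp hq1
  exact EReal.tendsto_coe.2 (hlog.div_atTop hv)

section RateFunction

variable {α : Type*} [DecidableEq α]

def twoPointRate (a b : α) (c : ℝ≥0∞) (x : α) : ℝ≥0∞ :=
  if x = a then 0 else if x = b then c else ⊤

open Classical in
theorem biInf_twoPointRate (a b : α) (c : ℝ≥0∞) (S : Set α) :
    ⨅ x ∈ S, twoPointRate a b c x = if a ∈ S then 0 else if b ∈ S then c else ⊤ := by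
  apply le_antisymm
  · split_ifs with ha hb
    · exact iInf₂_le_of_le a ha (by simp [twoPointRate])
    · exact iInf₂_le_of_le b hb (by simp [twoPointRate, show b ≠ a by rintro rfl; exact ha hb])
    · exact le_top
  · refine le_iInf₂ fun x hx => ?_
    unfold twoPointRate
    split_ifs <;> simp_all

end RateFunction

section TwoAtomLaw

variable {Ω α : Type*} [MeasurableSpace Ω] {μ : Measure Ω} {X : Ω → α} {x y : α} {S : Set α}

theorem measure_eq_le_measure_preimage (hx : x ∈ S) : μ {ω | X ω = x} ≤ μ (X ⁻¹' S) :=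
  measure_mono fun ω (h : X ω = x) => show X ω ∈ S from h ▸ hx

variable [MeasurableSpace α] [MeasurableSingletonClass α] [IsProbabilityMeasure μ]

theorem measure_preimage_le_one_sub (hX : Measurable X) (hx : x ∉ S) :
    μ (X ⁻¹' S) ≤ 1 - μ {ω | X ω = x} := by
  refine (measure_mono fun ω hω (h : X ω = x) => hx (h ▸ hω)).trans_eq ?_
  exact prob_compl_eq_one_sub (hX (measurableSet_singleton x))

theorem measure_preimage_eq_zero_of_two_atoms (hX : Measurable X)
    (hsum : μ {ω | X ω = x} + μ {ω | X ω = y} = 1) (hxy : x ≠ y) (hx : x ∉ S) (hy : y ∉ S) :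
    μ (X ⁻¹' S) = 0 := by
  have hmeas : ∀ z, MeasurableSet {ω | X ω = z} := fun z => hX (measurableSet_singleton z)
  have hdisj : Disjoint {ω | X ω = x} {ω | X ω = y} :=
    Set.disjoint_left.2 fun ω (hx : X ω = x) (hy : X ω = y) => hxy (hx.symm.trans hy)
  have hunion : μ ({ω | X ω = x} ∪ {ω | X ω = y}) = 1 := by
    rw [measure_union hdisj (hmeas y), hsum]
  refine measure_mono_null (fun ω hω => ?_) ((prob_compl_eq_zero_iff
    ((hmeas x).union (hmeas y))).2 hunion)
  rintro (h | h)
  exacts [hx (h ▸ hω), hy (h ▸ hω)]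

end TwoAtomLaw

section LargeDeviations

variable {Ω α ι : Type*} [MeasurableSpace Ω] [TopologicalSpace α]
  {l : Filter ι} [l.NeBot] {μ : ι → Measure Ω} {X : ι → Ω → α} {v : ι → ℝ}
  {x₁ x₂ : ι → α} {a b : α} {c : ℝ≥0∞}

theorem le_liminf_scaledLog_of_tendsto_atom (hv : ∀ i, 0 ≤ v i) {z : ι → α} {w : α}
    {L : EReal} (hz : Tendsto z l (nhds w))
    (hL : Tendsto (fun i => scaledLog (v i) (μ i {ω | X i ω = z i})) l (nhds L))
    {O : Set α} (hO : IsOpen O) (hw : w ∈ O) :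
    L ≤ liminf (fun i => scaledLog (v i) (μ i (X i ⁻¹' O))) l :=
  hL.liminf_eq ▸ liminf_le_liminf ((hz.eventually (hO.mem_nhds hw)).mono fun i hi =>
    scaledLog_mono (hv i) (measure_eq_le_measure_preimage hi))

theorem le_liminf_scaledLog_of_isOpen [DecidableEq α] (hv : ∀ i, 0 ≤ v i)
    (hx₁ : Tendsto x₁ l (nhds a)) (hx₂ : Tendsto x₂ l (nhds b))
    (hA : Tendsto (fun i => scaledLog (v i) (μ i {ω | X i ω = x₁ i})) l (nhds 0))
    (hB : Tendsto (fun i => scaledLog (v i) (μ i {ω | X i ω = x₂ i})) l (nhds (-c)))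
    {O : Set α} (hO : IsOpen O) :
    -((⨅ x ∈ O, twoPointRate a b c x : ℝ≥0∞) : EReal) ≤
      liminf (fun i => scaledLog (v i) (μ i (X i ⁻¹' O))) l := by
  classical
  rw [biInf_twoPointRate]
  split_ifs with ha hb
  · simpa using le_liminf_scaledLog_of_tendsto_atom hv hx₁ hA hO ha
  · exact le_liminf_scaledLog_of_tendsto_atom hv hx₂ hB hO hb
  · simp

theorem limsup_scaledLog_le_of_isClosed [DecidableEq α] [T2Space α] [MeasurableSpace α]
    [MeasurableSingletonClass α] [∀ i, IsProbabilityMeasure (μ i)] (hX : ∀ i, Measurable (X i))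
    (hv : ∀ i, 0 < v i) (hx₁ : Tendsto x₁ l (nhds a)) (hx₂ : Tendsto x₂ l (nhds b)) (hab : a ≠ b)
    (hsum : ∀ i, μ i {ω | X i ω = x₁ i} + μ i {ω | X i ω = x₂ i} = 1)
    (hB : Tendsto (fun i => scaledLog (v i) (μ i {ω | X i ω = x₂ i})) l (nhds (-c)))
    {C : Set α} (hC : IsClosed C) :
    limsup (fun i => scaledLog (v i) (μ i (X i ⁻¹' C))) l ≤
      -((⨅ x ∈ C, twoPointRate a b c x : ℝ≥0∞) : EReal) := by
  classical
  rw [biInf_twoPointRate]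
  by_cases ha : a ∈ C
  · simpa [ha] using limsup_le_of_le (by isBoundedDefault) (Eventually.of_forall fun i =>
      scaledLog_nonpos (hv i).le prob_le_one)
  have hx₁C : ∀ᶠ i in l, x₁ i ∉ C := hx₁.eventually (hC.isOpen_compl.mem_nhds ha)
  split_ifs with hb
  · rw [← hB.limsup_eq]
    refine limsup_le_limsup (hx₁C.mono fun i hi => scaledLog_mono (hv i).le ?_)
    calc μ i (X i ⁻¹' C) ≤ 1 - μ i {ω | X i ω = x₁ i} := measure_preimage_le_one_sub (hX i) hi
      _ = μ i {ω | X i ω = x₂ i} :=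
        (ENNReal.eq_sub_of_add_eq (measure_ne_top _ _) ((add_comm _ _).trans (hsum i))).symm
  · have hx₂C : ∀ᶠ i in l, x₂ i ∉ C := hx₂.eventually (hC.isOpen_compl.mem_nhds hb)
    have hne : ∀ᶠ i in l, x₁ i ≠ x₂ i :=
      (hx₁.prodMk_nhds hx₂).eventually (isClosed_diagonal.isOpen_compl.mem_nhds hab)
    refine limsup_le_of_le (by isBoundedDefault) ?_
    filter_upwards [hx₁C, hx₂C, hne] with i h₁ h₂ hne
    rw [measure_preimage_eq_zero_of_two_atoms (hX i) (hsum i) hne h₁ h₂, scaledLog_zero (hv i)]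
    simp

end LargeDeviations

theorem stmt_13_general {Ω : Type*} [MeasurableSpace Ω]
    (μ : ℕ → Measure Ω) (hμ : ∀ n, IsProbabilityMeasure (μ n))
    (X : ℕ → Ω → EReal) (hX : ∀ n, Measurable (X n))
    (p : ℕ → ℝ) (hp : ∀ n, p n ∈ Set.Ioo (0 : ℝ) 1)
    (x1 x2 : ℕ → ℝ)
    (hlaw1 : ∀ n, μ n {ω | X n ω = ((x1 n : ℝ) : EReal)} = ENNReal.ofReal (1 - p n))
    (hlaw2 : ∀ n, μ n {ω | X n ω = ((x2 n : ℝ) : EReal)} = ENNReal.ofReal (p n))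
    (hp0 : Tendsto p atTop (nhds 0))
    (hx1 : Tendsto x1 atTop (nhds 0))
    (xbar : EReal) (hxbar : 0 < xbar)
    (hx2 : Tendsto (fun n => ((x2 n : ℝ) : EReal)) atTop (nhds xbar))
    (v : ℕ → ℝ) (hv : ∀ n, 0 < v n) (hvinf : Tendsto v atTop atTop)
    (c : ℝ≥0∞)
    (hpc : Tendsto (fun n => ((Real.log (p n) / v n : ℝ) : EReal)) atTop
      (nhds (-(c : EReal))))
    (I : EReal → ℝ≥0∞)
    (hI : ∀ x : EReal, I x = if x = 0 then 0 else if x = xbar then c else ⊤) :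
    (∀ O : Set EReal, IsOpen O →
      -((⨅ x ∈ O, I x : ℝ≥0∞) : EReal) ≤
        liminf (fun n => (((v n)⁻¹ : ℝ) : EReal) *
          ENNReal.log (μ n (X n ⁻¹' O))) atTop) ∧
    (∀ C : Set EReal, IsClosed C →
      limsup (fun n => (((v n)⁻¹ : ℝ) : EReal) *
          ENNReal.log (μ n (X n ⁻¹' C))) atTop ≤
        -((⨅ x ∈ C, I x : ℝ≥0∞) : EReal)) := by
  obtain rfl : I = twoPointRate 0 xbar c := funext hI
  have hx1E : Tendsto (fun n => ((x1 n : ℝ) : EReal)) atTop (nhds 0) :=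
    EReal.tendsto_coe.2 hx1
  have hA : Tendsto (fun n => scaledLog (v n) (μ n {ω | X n ω = x1 n})) atTop (nhds 0) := by
    simp_rw [hlaw1]
    exact tendsto_scaledLog_ofReal_of_tendsto_one (fun n => sub_pos.2 (hp n).2)
      (by simpa using tendsto_const_nhds.sub hp0) hvinf
  have hB : Tendsto (fun n => scaledLog (v n) (μ n {ω | X n ω = x2 n})) atTop (nhds (-c)) := by
    simpa only [hlaw2, scaledLog_ofReal _ (hp _).1] using hpc
  have hsum : ∀ n, μ n {ω | X n ω = x1 n} + μ n {ω | X n ω = x2 n} = 1 := fun n => by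
    rw [hlaw1, hlaw2, ← ENNReal.ofReal_add (sub_nonneg.2 (hp n).2.le) (hp n).1.le]
    simp
  exact ⟨fun O hO => le_liminf_scaledLog_of_isOpen (fun n => (hv n).le) hx1E hx2 hA hB hO,
    fun C hC => limsup_scaledLog_le_of_isClosed hX hv hx1E hx2 hxbar.ne hsum hB hC⟩

/-- LDP for a sequence of two-valued random variables on
`ℝ̄ = ℝ ∪ {+∞}` (modeled inside `EReal`). `X n` takes the value `x1 n ≥ 0`
with probability `1 - p n` and the value `x2 n ≥ 0` with probability `p n`,
`p n → 0`, `x1 n → 0`, `x2 n → x̄ ∈ (0, +∞]`, `v n → ∞`,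
`log(p n)/v n → -c` with `c ∈ (0, +∞]`. The rate function is
`I 0 = 0`, `I x̄ = c`, `I = +∞` elsewhere. -/
theorem stmt_13 {Ω : Type*} [MeasurableSpace Ω]
    (μ : ℕ → Measure Ω) (hμ : ∀ n, IsProbabilityMeasure (μ n))
    (X : ℕ → Ω → EReal) (hX : ∀ n, Measurable (X n))
    (p : ℕ → ℝ) (hp : ∀ n, p n ∈ Set.Ioo (0 : ℝ) 1)
    (x1 x2 : ℕ → ℝ) (hx1pos : ∀ n, 0 ≤ x1 n) (hx2pos : ∀ n, 0 ≤ x2 n)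
    (hlaw1 : ∀ n, μ n {ω | X n ω = ((x1 n : ℝ) : EReal)} = ENNReal.ofReal (1 - p n))
    (hlaw2 : ∀ n, μ n {ω | X n ω = ((x2 n : ℝ) : EReal)} = ENNReal.ofReal (p n))
    (hp0 : Tendsto p atTop (nhds 0))
    (hx1 : Tendsto x1 atTop (nhds 0))
    (xbar : EReal) (hxbar : 0 < xbar)
    (hx2 : Tendsto (fun n => ((x2 n : ℝ) : EReal)) atTop (nhds xbar))
    (v : ℕ → ℝ) (hv : ∀ n, 0 < v n) (hvinf : Tendsto v atTop atTop)
    (c : ℝ≥0∞) (hc : 0 < c)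
    (hpc : Tendsto (fun n => ((Real.log (p n) / v n : ℝ) : EReal)) atTop
      (nhds (-(c : EReal))))
    (I : EReal → ℝ≥0∞)
    (hI : ∀ x : EReal, I x = if x = 0 then 0 else if x = xbar then c else ⊤) :
    (∀ O : Set EReal, IsOpen O →
      -((⨅ x ∈ O, I x : ℝ≥0∞) : EReal) ≤
        liminf (fun n => (((v n)⁻¹ : ℝ) : EReal) *
          ENNReal.log (μ n (X n ⁻¹' O))) atTop) ∧
    (∀ C : Set EReal, IsClosed C →
      limsup (fun n => (((v n)⁻¹ : ℝ) : EReal) *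
          ENNReal.log (μ n (X n ⁻¹' C))) atTop ≤
        -((⨅ x ∈ C, I x : ℝ≥0∞) : EReal)) :=
  stmt_13_general μ hμ X hX p hp x1 x2 hlaw1 hlaw2 hp0 hx1 xbar hxbar hx2 v hv hvinf c hpc I hI
end

section
/- Let {q_n} ⊂ (0,1) with q_n m_n → ∞ where {m_n} ⊂ [1,∞). Then for every fixed k ∈ ℕ, 1 - P(Bin(⌊m_n⌋, q_n) ≥ k) = (1-q_n)^{m_n} · ((q_n m_n)^{k-1}/(k-1)!) · (1 + o(1)) as n → ∞. -/
/-! Write `k = j + 1` and `M = ⌊m⌋₊`. Then `1 - P(Bin(M, q) ≥ k) = ∑_{i ≤ j} C(M,i) q^i (1-q)^(M-i)`,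
and after division by `(1-q)^m (qm)^j / j!` the `i`-th term factors as
`j! · C(M,i)/m^i · (qm)^(i-j) · (1-q)^(M-i-m)`. Since `C(⌊m⌋₊,i) ~ m^i/i!`, and
`(1-q)^(M-i-m) → 1` because the exponent stays bounded while `q → 0`, the term `i = j` tends to `1`
and the others vanish because `qm → ∞`. -/

open Filter

/-- The probability that a `Bin(m,p)` random variable equals `i`. -/
noncomputable def binomialP (m : ℕ) (p : ℝ) (i : ℕ) : ℝ :=
  (m.choose i : ℝ) * p ^ i * (1 - p) ^ (m - i)

/-- `P(Bin(m,p) ≥ k)`. -/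
noncomputable def binomTail (m : ℕ) (p : ℝ) (k : ℕ) : ℝ :=
  ∑ i ∈ Finset.Icc k m, binomialP m p i

open Topology Asymptotics

lemma sum_range_binomialP (M : ℕ) (p : ℝ) :
    ∑ i ∈ Finset.range (M + 1), binomialP M p i = 1 := by
  calc _ = (p + (1 - p)) ^ M := by
        rw [add_pow]
        exact Finset.sum_congr rfl fun i _ => by rw [binomialP]; ring
    _ = 1 := by rw [add_sub_cancel, one_pow]

lemma one_sub_binomTail {k M : ℕ} (hkM : k ≤ M) (p : ℝ) :
    1 - binomTail M p k = ∑ i ∈ Finset.range k, binomialP M p i := by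
  rw [← sum_range_binomialP M p, ← Finset.sum_range_add_sum_Ico _ (by omega : k ≤ M + 1),
    binomTail, ← Finset.Ico_add_one_right_eq_Icc, add_sub_cancel_right]

lemma binomialP_div_eq {M i j : ℕ} (hij : i ≤ j) {p x : ℝ} (hp : p ∈ Set.Ioo 0 1) (hx : 0 < x) :
    binomialP M p i / ((1 - p) ^ x * ((p * x) ^ j / j.factorial)) =
      j.factorial * (M.choose i / x ^ i) * ((p * x) ^ (j - i))⁻¹ *
        ((1 - p) ^ (M - i) / (1 - p) ^ x) := by
  have hpx : p * x ≠ 0 := (mul_pos hp.1 hx).ne'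
  have h1p : (1 - p) ^ x ≠ 0 := (Real.rpow_pos_of_pos (sub_pos.2 hp.2) x).ne'
  rw [binomialP, pow_sub₀ _ hpx hij, mul_pow]
  field_simp
  ring

lemma tendsto_choose_floor_div_pow (i : ℕ) :
    Tendsto (fun x : ℝ => (Nat.choose ⌊x⌋₊ i : ℝ) / x ^ i) atTop (𝓝 (1 / i.factorial)) := by
  have hfloor : Tendsto (fun x : ℝ => (⌊x⌋₊ : ℝ) ^ i / i.factorial / x ^ i) atTop
      (𝓝 (1 / i.factorial)) := by
    have := ((tendsto_nat_floor_div_atTop (R := ℝ)).pow i).div_const (i.factorial : ℝ)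
    rw [one_pow] at this
    refine this.congr fun x => ?_
    rw [div_pow]
    ring
  exact (((isEquivalent_choose i).comp_tendsto tendsto_nat_floor_atTop).div
    IsEquivalent.refl).symm.tendsto_nhds hfloor

section

variable {α : Type*} {l : Filter α}

lemma tendsto_rpow_of_tendsto_one {b e : α → ℝ}
    (hb : Tendsto b l (𝓝 1)) (he : IsBoundedUnder (· ≤ ·) l (fun x => |e x|)) :
    Tendsto (fun x => b x ^ e x) l (𝓝 1) := by
  have hlog : Tendsto (fun x => Real.log (b x)) l (𝓝 0) := by
    simpa [Function.comp_def] using (Real.continuousAt_log one_ne_zero).tendsto.comp hb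
  have hexp := (hlog.zero_mul_isBoundedUnder_le he).rexp
  rw [Real.exp_zero] at hexp
  refine hexp.congr' ?_
  filter_upwards [hb.eventually (lt_mem_nhds one_pos)] with x hx
  rw [Real.rpow_def_of_pos hx]

lemma tendsto_one_sub_pow_floor_sub_div_rpow {q m : α → ℝ}
    (hq : Tendsto q l (𝓝 0)) (hm : Tendsto m l atTop) (i : ℕ) :
    Tendsto (fun x => (1 - q x) ^ (⌊m x⌋₊ - i) / (1 - q x) ^ m x) l (𝓝 1) := by
  have hb : Tendsto (fun x => 1 - q x) l (𝓝 1) := by simpa using tendsto_const_nhds.sub hq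
  have he : IsBoundedUnder (· ≤ ·) l (fun x => |((⌊m x⌋₊ - i : ℕ) : ℝ) - m x|) := by
    refine isBoundedUnder_of_eventually_le (a := i + 1) ?_
    filter_upwards [(tendsto_nat_floor_atTop.comp hm).eventually_ge_atTop i,
      hm.eventually_ge_atTop 0] with x (hi : i ≤ ⌊m x⌋₊) h0
    rw [Nat.cast_sub hi, abs_le]
    have := Nat.floor_le h0
    have := Nat.lt_floor_add_one (m x)
    constructor <;> linarith
  refine (tendsto_rpow_of_tendsto_one hb he).congr' ?_
  filter_upwards [hb.eventually (lt_mem_nhds one_pos)] with x hx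
  rw [Real.rpow_sub hx, Real.rpow_natCast]

lemma tendsto_atTop_of_tendsto_mul_atTop {q m : α → ℝ}
    (hq : ∀ᶠ x in l, q x ∈ Set.Ioc 0 1) (hqm : Tendsto (fun x => q x * m x) l atTop) :
    Tendsto m l atTop := by
  refine tendsto_atTop_mono' l ?_ hqm
  filter_upwards [hq, hqm.eventually_gt_atTop 0] with x hqx hqmx
  exact mul_le_of_le_one_left (pos_of_mul_pos_right hqmx hqx.1.le).le hqx.2

lemma tendsto_binomialP_div {q m : α → ℝ}
    (hq : ∀ᶠ x in l, q x ∈ Set.Ioo 0 1) (hq0 : Tendsto q l (𝓝 0))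
    (hqm : Tendsto (fun x => q x * m x) l atTop) {i j : ℕ} (hij : i ≤ j) :
    Tendsto (fun x => binomialP ⌊m x⌋₊ (q x) i /
        ((1 - q x) ^ m x * ((q x * m x) ^ j / j.factorial))) l (𝓝 (if i = j then 1 else 0)) := by
  have hm : Tendsto m l atTop :=
    tendsto_atTop_of_tendsto_mul_atTop (hq.mono fun x hx => ⟨hx.1, hx.2.le⟩) hqm
  have hpow : Tendsto (fun x => ((q x * m x) ^ (j - i))⁻¹) l (𝓝 (if i = j then 1 else 0)) := by
    split_ifs with h
    · simpa [h] using tendsto_const_nhds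
    · exact ((tendsto_pow_atTop (by omega)).comp hqm).inv_tendsto_atTop
  have hlim := ((((tendsto_choose_floor_div_pow i).comp hm).const_mul (j.factorial : ℝ)).mul
    hpow).mul (tendsto_one_sub_pow_floor_sub_div_rpow hq0 hm i)
  rw [show (j.factorial : ℝ) * (1 / i.factorial) * (if i = j then 1 else 0) * 1 =
      if i = j then 1 else 0 by split_ifs with h <;> simp [h, Nat.factorial_ne_zero]] at hlim
  refine hlim.congr' ?_
  filter_upwards [hq, hm.eventually_gt_atTop 0] with x hqx hmx
  rw [binomialP_div_eq hij hqx hmx]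
  rfl

end

theorem stmt_19_general (q m : ℕ → ℝ)
    (hq : ∀ n, q n ∈ Set.Ioo (0 : ℝ) 1)
    (hq0 : Tendsto q atTop (nhds 0))
    (hqm : Tendsto (fun n => q n * m n) atTop atTop)
    (k : ℕ) (hk : 1 ≤ k) :
    Tendsto (fun n =>
        (1 - binomTail ⌊m n⌋₊ (q n) k) /
          ((1 - q n) ^ (m n) * ((q n * m n) ^ (k - 1) / ((k - 1).factorial : ℝ))))
      atTop (nhds 1) := by
  obtain ⟨j, rfl⟩ : ∃ j, k = j + 1 := ⟨k - 1, by omega⟩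
  have hm : Tendsto m atTop atTop :=
    tendsto_atTop_of_tendsto_mul_atTop (.of_forall fun n => ⟨(hq n).1, (hq n).2.le⟩) hqm
  have hsum := tendsto_finsetSum (Finset.range (j + 1)) fun i hi =>
    tendsto_binomialP_div (.of_forall hq) hq0 hqm (Nat.lt_succ_iff.mp (Finset.mem_range.mp hi))
  rw [Finset.sum_ite_eq', if_pos (Finset.self_mem_range_succ j)] at hsum
  refine hsum.congr' ?_
  filter_upwards [(tendsto_nat_floor_atTop.comp hm).eventually_ge_atTop (j + 1)] with n
    (hn : j + 1 ≤ ⌊m n⌋₊)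
  rw [Nat.add_sub_cancel, one_sub_binomTail hn, Finset.sum_div]

/-- if `q_n → 0` and `q_n m_n → ∞`, then for every fixed `k ≥ 1`,
`1 - P(Bin(⌊m_n⌋, q_n) ≥ k) = (1-q_n)^{m_n} ((q_n m_n)^{k-1}/(k-1)!)(1+o(1))`,
i.e. the ratio tends to `1`. -/
theorem stmt_19 (q m : ℕ → ℝ)
    (hq : ∀ n, q n ∈ Set.Ioo (0 : ℝ) 1) (hm : ∀ n, 1 ≤ m n)
    (hq0 : Tendsto q atTop (nhds 0))
    (hqm : Tendsto (fun n => q n * m n) atTop atTop)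
    (k : ℕ) (hk : 1 ≤ k) :
    Tendsto (fun n =>
        (1 - binomTail ⌊m n⌋₊ (q n) k) /
          ((1 - q n) ^ (m n) * ((q n * m n) ^ (k - 1) / ((k - 1).factorial : ℝ))))
      atTop (nhds 1) :=
  stmt_19_general q m hq hq0 hqm k hk
end
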